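/- For every θ with 0 < θ < √d, the function ℓ is differentiable at θ and its derivative satisfies the identity ℓ'(θ) = (1+θ²/d)/(1−θ²/d)² · ( θ − m(θ) ). -/

import Mathlib

open MeasureTheory Real Set
open scoped ENNReal

noncomputable section

namespace OMDA

/-- `t_p(x)`. -/
def tp (p x : ℝ) : ℝ :=
  (p * Real.exp x - (1 - p) * Real.exp (-x)) / (p * Real.exp x + (1 - p) * Real.exp (-x))

/-- `c_p(x)`. -/
def cp (p x : ℝ) : ℝ := p * Real.exp x + (1 - p) * Real.exp (-x)

/-- The standard normal density on `ℝ`. -/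
def phi1 (z : ℝ) : ℝ := Real.exp (-z ^ 2 / 2) / Real.sqrt (2 * π)

/-- Expectation of `g Z` for `Z ∼ N(0,1)`. -/
def gexp (g : ℝ → ℝ) : ℝ := ∫ z : ℝ, g z * phi1 z

/-- The univariate population EM map `m(θ)`. -/
def m (p : ℝ) (d : ℕ) (θ : ℝ) : ℝ :=
  gexp fun z => tp p (θ * z / (1 - θ ^ 2 / d)) * z

/-- The radial negative population log-likelihood `ℓ(θ)`. -/
def ell (p : ℝ) (d : ℕ) (θ : ℝ) : ℝ :=
  (d / 2 : ℝ) * Real.log (2 * π * (1 - θ ^ 2 / d)) + ((d : ℝ) + θ ^ 2) / (2 * (1 - θ ^ 2 / d))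
    - gexp fun z => Real.log (cp p (θ * z / (1 - θ ^ 2 / d)))

/-- `q := 1 - (2p-1)²/2`. -/
def qp (p : ℝ) : ℝ := 1 - (2 * p - 1) ^ 2 / 2

/-- The initialization radius `√(d·(2+q−√(8q+q²))/2)`. -/
def θmax (p : ℝ) (d : ℕ) : ℝ :=
  Real.sqrt ((d : ℝ) * (2 + qp p - Real.sqrt (8 * qp p + qp p ^ 2)) / 2)

/-- `ρ := (1+θ₀²/d)/(1−θ₀²/d)² · (1 − (2p−1)²/2)`. -/
def ρc (p : ℝ) (d : ℕ) (θ0 : ℝ) : ℝ :=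
  (1 + θ0 ^ 2 / d) / (1 - θ0 ^ 2 / d) ^ 2 * (1 - (2 * p - 1) ^ 2 / 2)

/-- `ℝᵈ` with the Euclidean norm. -/
abbrev E (d : ℕ) := EuclideanSpace ℝ (Fin d)

/-- Density of `N(ν, σ²·I_d)` on `ℝᵈ`. -/
def gpdf (d : ℕ) (ν : E d) (σ2 : ℝ) (x : E d) : ℝ :=
  (2 * π * σ2) ^ (-(d : ℝ) / 2) * Real.exp (-‖x - ν‖ ^ 2 / (2 * σ2))

/-- Density of the mixture `(1−p)·N(ν−θ, σ²I) + p·N(ν+θ, σ²I)`. -/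
def mixPdf (p : ℝ) (d : ℕ) (ν θ : E d) (σ2 : ℝ) (x : E d) : ℝ :=
  (1 - p) * gpdf d (ν - θ) σ2 x + p * gpdf d (ν + θ) σ2 x

/-- The population EM operator `M(θ)`. -/
def Mop (p : ℝ) (d : ℕ) (θ : E d) : E d :=
  ∫ z : E d, (gpdf d 0 1 z * tp p ((inner ℝ θ z : ℝ) / (1 - ‖θ‖ ^ 2 / d))) • z

/-- KL divergence `D_KL[N(0,I_d) ∥ G(θ, σ²)]`, written via densities. -/
def klStd (p : ℝ) (d : ℕ) (θ : E d) (σ2 : ℝ) : ℝ :=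
  ∫ z : E d, gpdf d 0 1 z * Real.log (gpdf d 0 1 z / mixPdf p d 0 θ σ2 z)

/-- The standard normal cdf `Φ`. -/
def stdNormCdf (x : ℝ) : ℝ := ∫ z in Iic x, phi1 z

/-- Misclassification probability of a classifier `h` under the distribution `D`
with class-conditional laws `N(±μ, I_d)` and balanced classes. -/
def errProb (d : ℕ) (μ : E d) (h : E d → ℝ) : ℝ :=
  (1 / 2) * (∫ x in {x | h x ≠ 1}, gpdf d μ 1 x)
    + (1 / 2) * (∫ x in {x | h x ≠ -1}, gpdf d (-μ) 1 x)

/-- The measure `N(ν, I_d)` on `ℝᵈ`, via its density. -/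
def gaussMeasure (d : ℕ) (ν : E d) : Measure (E d) :=
  volume.withDensity fun x => ENNReal.ofReal (gpdf d ν 1 x)

/-- The standard Gaussian measure `N(0, I_d)`. -/
def stdGaussMeasure (d : ℕ) : Measure (E d) := gaussMeasure d 0

/-- The joint distribution `D` of `(X, Y)` on `ℝᵈ × ℝ`. -/
def Dmeas (d : ℕ) (μ : E d) : Measure (E d × ℝ) :=
  (1 / 2 : ℝ≥0∞) • ((gaussMeasure d μ).prod (Measure.dirac (1 : ℝ)))
    + (1 / 2 : ℝ≥0∞) • ((gaussMeasure d (-μ)).prod (Measure.dirac (-1 : ℝ)))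

/-- Chi-squared measure with `k` degrees of freedom. -/
def chiSqMeasure (k : ℕ) : Measure ℝ := ProbabilityTheory.gammaMeasure ((k : ℝ) / 2) (1 / 2)


lemma cp_pos {p : ℝ} (hp : p ∈ Set.Ioo (1/2:ℝ) 1) (x : ℝ) : 0 < cp p x := by
  have h1 : 0 < p := lt_trans (by norm_num) hp.1
  have h2 : 0 < 1 - p := by linarith [hp.2]
  have := Real.exp_pos x
  have := Real.exp_pos (-x)
  unfold cp; positivity

lemma abs_tp_le_one {p : ℝ} (hp : p ∈ Set.Ioo (1/2:ℝ) 1) (x : ℝ) : |tp p x| ≤ 1 := by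
  have h1 : 0 < p := lt_trans (by norm_num) hp.1
  have h2 : 0 < 1 - p := by linarith [hp.2]
  have hc := cp_pos hp x
  unfold tp
  rw [abs_div]
  rw [show p * Real.exp x + (1 - p) * Real.exp (-x) = cp p x from rfl, abs_of_pos hc,
    div_le_one hc]
  have e1 := Real.exp_pos x
  have e2 := Real.exp_pos (-x)
  unfold cp
  rw [abs_sub_le_iff]
  constructor <;> nlinarith

lemma hasDerivAt_log_cp {p : ℝ} (hp : p ∈ Set.Ioo (1/2:ℝ) 1) (x : ℝ) :
    HasDerivAt (fun y => Real.log (cp p y)) (tp p x) x := by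
  have hc : HasDerivAt (cp p) (p * Real.exp x - (1 - p) * Real.exp (-x)) x := by
    have h1 : HasDerivAt (fun y : ℝ => p * Real.exp y) (p * Real.exp x) x :=
      (Real.hasDerivAt_exp x).const_mul p
    have h2 : HasDerivAt (fun y : ℝ => (1 - p) * Real.exp (-y))
        ((1 - p) * (Real.exp (-x) * (-1))) x :=
      ((Real.hasDerivAt_exp (-x)).comp x ((hasDerivAt_id x).neg)).const_mul (1 - p)
    have := h1.add h2
    refine this.congr_deriv ?_; ring
  have := hc.log (cp_pos hp x).ne'
  exact this.congr_deriv rfl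

lemma abs_log_cp_le {p : ℝ} (hp : p ∈ Set.Ioo (1/2:ℝ) 1) (x : ℝ) :
    |Real.log (cp p x)| ≤ |x| + |Real.log (1 - p)| := by
  have h1 : 0 < p := lt_trans (by norm_num) hp.1
  have h2 : 0 < 1 - p := by linarith [hp.2]
  have hc := cp_pos hp x
  have hupper : Real.log (cp p x) ≤ |x| := by
    rw [Real.log_le_iff_le_exp hc]
    unfold cp
    have e1 : Real.exp x ≤ Real.exp |x| := Real.exp_le_exp.2 (le_abs_self x)
    have e2 : Real.exp (-x) ≤ Real.exp |x| := Real.exp_le_exp.2 (neg_le_abs x)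
    nlinarith [Real.exp_pos x, Real.exp_pos (-x)]
  have hlower : Real.log (1 - p) - |x| ≤ Real.log (cp p x) := by
    have hle : (1 - p) * Real.exp (-|x|) ≤ cp p x := by
      unfold cp
      rcases le_or_gt 0 x with h | h
      · rw [abs_of_nonneg h]
        nlinarith [Real.exp_pos x]
      · rw [abs_of_neg h, neg_neg]
        have : (1 - p) * Real.exp x ≤ p * Real.exp x := by
          have : 1 - p ≤ p := by linarith [hp.1]
          nlinarith [Real.exp_pos x]
        nlinarith [Real.exp_pos (-x)]
    have := Real.log_le_log (by positivity) hle
    rwa [Real.log_mul h2.ne' (Real.exp_ne_zero _), Real.log_exp] at this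
  have hlp : Real.log (1 - p) ≤ 0 := Real.log_nonpos (by linarith) (by linarith)
  rw [abs_le]
  constructor
  · rw [abs_of_nonpos hlp]; linarith
  · have : 0 ≤ |Real.log (1-p)| := abs_nonneg _
    linarith

lemma hasDerivAt_one_sub_sq_div {d : ℕ} (hd : 1 ≤ d) (x : ℝ) :
    HasDerivAt (fun y : ℝ => 1 - y ^ 2 / (d:ℝ)) (-(2 * x / d)) x := by
  have := ((hasDerivAt_pow 2 x).div_const (d:ℝ)).const_sub 1
  refine this.congr_deriv ?_
  push_cast
  ring

lemma hasDerivAt_inner {d : ℕ} (hd : 1 ≤ d) (z x : ℝ) (hS : 1 - x^2/(d:ℝ) ≠ 0) :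
    HasDerivAt (fun y => y * z / (1 - y ^ 2 / (d:ℝ)))
      (z * ((1 + x ^ 2 / d) / (1 - x ^ 2 / d) ^ 2)) x := by
  have hd0 : (0:ℝ) < d := by exact_mod_cast hd
  have h1 : HasDerivAt (fun y : ℝ => y * z) z x := by
    simpa using (hasDerivAt_id x).mul_const z
  have := h1.div (hasDerivAt_one_sub_sq_div hd x) hS
  refine this.congr_deriv ?_
  field_simp
  ring

lemma phi1_nonneg (z : ℝ) : 0 ≤ phi1 z := by
  unfold phi1; positivity

lemma integrable_phi1 : Integrable phi1 := by
  refine ((integrable_exp_neg_mul_sq (by norm_num : (0:ℝ) < 1/2)).div_const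
    (Real.sqrt (2*π))).congr (Filter.Eventually.of_forall fun z => ?_)
  show Real.exp (-(1/2:ℝ)*z^2) / Real.sqrt (2*π) = phi1 z
  unfold phi1
  rw [show -(1/2:ℝ)*z^2 = -z^2/2 by ring]

lemma integrable_abs_phi1 : Integrable (fun z : ℝ => |z| * phi1 z) := by
  refine ((integrable_mul_exp_neg_mul_sq (by norm_num : (0:ℝ) < 1/2)).abs.div_const
    (Real.sqrt (2*π))).congr (Filter.Eventually.of_forall fun z => ?_)
  show |z * Real.exp (-(1/2:ℝ)*z^2)| / Real.sqrt (2*π) = |z| * phi1 z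
  unfold phi1
  rw [abs_mul, abs_of_pos (Real.exp_pos _), show -(1/2:ℝ)*z^2 = -z^2/2 by ring]
  ring

lemma hasDerivAt_logTerm {d : ℕ} (hd : 1 ≤ d) {θ : ℝ} (hS : 0 < 1 - θ^2/(d:ℝ)) :
    HasDerivAt (fun x : ℝ => ((d:ℝ)/2) * Real.log (2*π*(1 - x^2/(d:ℝ))))
      (-θ/(1-θ^2/(d:ℝ))) θ := by
  have hd0 : (0:ℝ) < d := by exact_mod_cast hd
  have h2π : (0:ℝ) < 2 * π * (1 - θ^2/(d:ℝ)) := by positivity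
  have := (((hasDerivAt_one_sub_sq_div hd θ).const_mul (2*π)).log h2π.ne').const_mul ((d:ℝ)/2)
  refine this.congr_deriv ?_
  have hπ : (π:ℝ) ≠ 0 := Real.pi_ne_zero
  have hθ2' : θ^2 < (d:ℝ) := by
    have h := hS; rw [sub_pos, div_lt_one hd0] at h; exact h
  have h3 : (d:ℝ) - θ^2 ≠ 0 := (by nlinarith : (0:ℝ) < (d:ℝ) - θ^2).ne'
  have h4 : -θ^2 + (d:ℝ) ≠ 0 := (by nlinarith : (0:ℝ) < -θ^2 + (d:ℝ)).ne'
  field_simp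

lemma hasDerivAt_quadTerm {d : ℕ} (hd : 1 ≤ d) {θ : ℝ} (hS : 0 < 1 - θ^2/(d:ℝ)) :
    HasDerivAt (fun x : ℝ => ((d:ℝ) + x^2)/(2*(1 - x^2/(d:ℝ))))
      (2*θ/(1-θ^2/(d:ℝ))^2) θ := by
  have hd0 : (0:ℝ) < d := by exact_mod_cast hd
  have hnum : HasDerivAt (fun x : ℝ => (d:ℝ) + x^2) (2*θ) θ := by
    simpa using (hasDerivAt_pow 2 θ).const_add (d:ℝ)
  have hden : HasDerivAt (fun x : ℝ => 2*(1 - x^2/(d:ℝ))) (2*(-(2*θ/(d:ℝ)))) θ :=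
    (hasDerivAt_one_sub_sq_div hd θ).const_mul 2
  have := hnum.div hden (by positivity)
  refine this.congr_deriv ?_
  have hθ2' : θ^2 < (d:ℝ) := by
    have h := hS; rw [sub_pos, div_lt_one hd0] at h; exact h
  have h3 : (d:ℝ) - θ^2 ≠ 0 := (by nlinarith : (0:ℝ) < (d:ℝ) - θ^2).ne'
  have h4 : -θ^2 + (d:ℝ) ≠ 0 := (by nlinarith : (0:ℝ) < -θ^2 + (d:ℝ)).ne'
  field_simp
  ring

lemma combine_algebra {d : ℕ} (hd : 1 ≤ d) {θ : ℝ} (mv : ℝ) (hS : 0 < 1 - θ^2/(d:ℝ)) :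
    (1 + θ^2/(d:ℝ)) / (1 - θ^2/(d:ℝ))^2 * (θ - mv)
      = (-θ/(1-θ^2/(d:ℝ)) + 2*θ/(1-θ^2/(d:ℝ))^2)
        - (1 + θ^2/(d:ℝ)) / (1 - θ^2/(d:ℝ))^2 * mv := by
  have hd0 : (0:ℝ) < d := by exact_mod_cast hd
  have h1 : ((1:ℝ) - θ^2/(d:ℝ)) ≠ 0 := hS.ne'
  have hθ2' : θ^2 < (d:ℝ) := by
    have h := hS; rw [sub_pos, div_lt_one hd0] at h; exact h
  have h3 : (d:ℝ) - θ^2 ≠ 0 := (by nlinarith : (0:ℝ) < (d:ℝ) - θ^2).ne'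
  have h4 : -θ^2 + (d:ℝ) ≠ 0 := (by nlinarith : (0:ℝ) < -θ^2 + (d:ℝ)).ne'
  field_simp
  ring

theorem ell_hasDerivAt
    (p : ℝ) (hp : p ∈ Set.Ioo (1 / 2 : ℝ) 1) (d : ℕ) (hd : 1 ≤ d)
    (θ : ℝ) (hθ : 0 < θ) (hθd : θ < Real.sqrt d) :
    HasDerivAt (ell p d)
      ((1 + θ ^ 2 / d) / (1 - θ ^ 2 / d) ^ 2 * (θ - m p d θ)) θ := by
  have hd0 : (0:ℝ) < d := by
    have : (1:ℝ) ≤ d := by exact_mod_cast hd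
    linarith
  have hθ2 : θ^2 < d := (Real.lt_sqrt hθ.le).mp hθd
  have hS : 0 < 1 - θ^2/(d:ℝ) := by
    rw [sub_pos, div_lt_one hd0]; exact hθ2
  have hSne : (1 - θ^2/(d:ℝ)) ≠ 0 := hS.ne'
  have hdne : (d:ℝ) ≠ 0 := hd0.ne'
  -- ball setup
  set bb : ℝ := (θ + Real.sqrt d)/2 with hbb
  set ε : ℝ := (Real.sqrt d - θ)/2 with hεdef
  have hεpos : 0 < ε := by rw [hεdef]; linarith
  have hbbpos : 0 < bb := by rw [hbb]; positivity
  have hbb2 : bb^2 < d := by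
    have h1 : bb < Real.sqrt d := by rw [hbb]; linarith
    have := Real.sq_sqrt hd0.le
    nlinarith [Real.sqrt_nonneg (d:ℝ)]
  have hsb : 0 < 1 - bb^2/(d:ℝ)  := by
    rw [sub_pos, div_lt_one hd0]; exact hbb2
  have hball : ∀ x ∈ Metric.ball θ ε, x^2 < bb^2 := by
    intro x hx
    rw [Metric.mem_ball, Real.dist_eq, abs_lt] at hx
    have h1 : x < bb := by rw [hbb]; rw [hεdef] at hx; linarith [hx.2]
    have h2 : -bb < x := by rw [hbb]; rw [hεdef] at hx; linarith [hx.1]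
    nlinarith
  have hSball : ∀ x ∈ Metric.ball θ ε, 1 - bb^2/(d:ℝ) ≤ 1 - x^2/(d:ℝ) := by
    intro x hx
    have h := hball x hx
    have h2 : x^2/(d:ℝ) ≤ bb^2/(d:ℝ) := by gcongr
    linarith
  -- function and derivative under the integral
  set F : ℝ → ℝ → ℝ := fun x z => Real.log (cp p (x * z / (1 - x ^ 2 / d))) * phi1 z with hF
  set F' : ℝ → ℝ → ℝ := fun x z =>
    tp p (x * z / (1 - x ^ 2 / d)) * (z * ((1 + x ^ 2 / d) / (1 - x ^ 2 / d) ^ 2)) * phi1 z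
    with hF'
  -- continuity facts
  have cont_inner : ∀ x : ℝ, Continuous (fun z : ℝ => x * z / (1 - x ^ 2 / (d:ℝ))) :=
    fun x => (continuous_const.mul continuous_id).div_const _
  have cont_cp : Continuous (cp p) := by
    unfold cp
    exact (continuous_const.mul Real.continuous_exp).add
      (continuous_const.mul (Real.continuous_exp.comp continuous_neg))
  have cont_logcp : Continuous (fun y => Real.log (cp p y)) :=
    cont_cp.log fun y => (cp_pos hp y).ne'
  have cont_tp : Continuous (tp p) := by
    unfold tp
    exact ((continuous_const.mul Real.continuous_exp).sub
      (continuous_const.mul (Real.continuous_exp.comp continuous_neg))).div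
      ((continuous_const.mul Real.continuous_exp).add
        (continuous_const.mul (Real.continuous_exp.comp continuous_neg)))
      fun y => (cp_pos hp y).ne'
  have cont_phi1 : Continuous phi1 := by
    unfold phi1
    exact (Real.continuous_exp.comp (by continuity)).div_const _
  -- measurability
  have hF_meas : ∀ᶠ x in nhds θ, AEStronglyMeasurable (F x) volume :=
    Filter.Eventually.of_forall fun x =>
      ((cont_logcp.comp (cont_inner x)).mul cont_phi1).aestronglyMeasurable
  have hF'_meas : AEStronglyMeasurable (F' θ) volume :=
    (((cont_tp.comp (cont_inner θ)).mul (continuous_id.mul continuous_const)).mul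
      cont_phi1).aestronglyMeasurable
  -- integrability of F θ
  have hF_int : Integrable (F θ) volume := by
    refine Integrable.mono'
      ((integrable_abs_phi1.const_mul (θ/(1-θ^2/(d:ℝ)))).add
        (integrable_phi1.const_mul |Real.log (1-p)|))
      (((cont_logcp.comp (cont_inner θ)).mul cont_phi1).aestronglyMeasurable)
      (Filter.Eventually.of_forall fun z => ?_)
    have habs : |θ * z / (1 - θ^2/(d:ℝ))| = θ/(1-θ^2/(d:ℝ)) * |z| := by
      rw [abs_div, abs_mul, abs_of_pos hθ, abs_of_pos hS]
      ring
    have hb := abs_log_cp_le hp (θ * z / (1 - θ^2/(d:ℝ)))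
    rw [habs] at hb
    have h1 : ‖F θ z‖ = |Real.log (cp p (θ * z / (1 - θ^2/(d:ℝ))))| * phi1 z := by
      rw [hF]
      rw [Real.norm_eq_abs, abs_mul, abs_of_nonneg (phi1_nonneg z)]
    rw [h1]
    calc |Real.log (cp p (θ * z / (1 - θ^2/(d:ℝ))))| * phi1 z
        ≤ (θ/(1-θ^2/(d:ℝ)) * |z| + |Real.log (1-p)|) * phi1 z :=
          mul_le_mul_of_nonneg_right hb (phi1_nonneg z)
      _ = θ/(1-θ^2/(d:ℝ)) * (|z| * phi1 z) + |Real.log (1-p)| * phi1 z := by ring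
  -- uniform bound for the derivative on the ball
  set C : ℝ := (1 + bb^2/(d:ℝ)) / (1 - bb^2/(d:ℝ))^2 with hC
  have h_bound : ∀ᵐ z ∂(volume : Measure ℝ), ∀ x ∈ Metric.ball θ ε,
      ‖F' x z‖ ≤ C * (|z| * phi1 z) := by
    refine Filter.Eventually.of_forall fun z x hx => ?_
    have hx2 := hball x hx
    have hSx : 1 - bb^2/(d:ℝ) ≤ 1 - x^2/(d:ℝ) := hSball x hx
    have hSxpos : 0 < 1 - x^2/(d:ℝ) := lt_of_lt_of_le hsb hSx
    have hr : (1 + x^2/(d:ℝ)) / (1 - x^2/(d:ℝ))^2 ≤ C := by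
      rw [hC]
      apply div_le_div₀ (by positivity) (by nlinarith) (by positivity)
      nlinarith
    have hrpos : 0 ≤ (1 + x^2/(d:ℝ)) / (1 - x^2/(d:ℝ))^2 := by positivity
    have h1 : ‖F' x z‖ = |tp p (x * z / (1 - x^2/(d:ℝ)))| *
        (|z| * ((1 + x^2/(d:ℝ)) / (1 - x^2/(d:ℝ))^2)) * phi1 z := by
      rw [hF']
      rw [Real.norm_eq_abs, abs_mul, abs_mul, abs_mul, abs_of_nonneg (phi1_nonneg z),
        abs_of_nonneg hrpos]
    rw [h1]
    calc |tp p (x * z / (1 - x^2/(d:ℝ)))| *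
        (|z| * ((1 + x^2/(d:ℝ)) / (1 - x^2/(d:ℝ))^2)) * phi1 z
        ≤ 1 * (|z| * C) * phi1 z := by
          have ht := abs_tp_le_one hp (x * z / (1 - x^2/(d:ℝ)))
          have hb2 : |z| * ((1 + x^2/(d:ℝ)) / (1 - x^2/(d:ℝ))^2) ≤ |z| * C :=
            mul_le_mul_of_nonneg_left hr (abs_nonneg z)
          exact mul_le_mul_of_nonneg_right
            (mul_le_mul ht hb2 (by positivity) (by norm_num)) (phi1_nonneg z)
      _ = C * (|z| * phi1 z) := by ring
  have bound_integrable : Integrable (fun z : ℝ => C * (|z| * phi1 z)) volume :=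
    integrable_abs_phi1.const_mul C
  -- differentiability of the integrand on the ball
  have h_diff : ∀ᵐ z ∂(volume : Measure ℝ), ∀ x ∈ Metric.ball θ ε,
      HasDerivAt (fun y => F y z) (F' x z) x := by
    refine Filter.Eventually.of_forall fun z x hx => ?_
    have hSxpos : 0 < 1 - x^2/(d:ℝ) := lt_of_lt_of_le hsb (hSball x hx)
    exact ((hasDerivAt_log_cp hp _).comp x (hasDerivAt_inner hd z x hSxpos.ne')).mul_const
      (phi1 z)
  -- differentiation under the integral sign
  have key := (hasDerivAt_integral_of_dominated_loc_of_deriv_le (Metric.ball_mem_nhds θ hεpos) hF_meas hF_int hF'_meas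
    h_bound bound_integrable h_diff).2
  -- rewrite the integral of the derivative
  have hint : (∫ z : ℝ, F' θ z) =
      (1 + θ^2/(d:ℝ)) / (1 - θ^2/(d:ℝ))^2 * m p d θ := by
    have : (fun z : ℝ => F' θ z) = fun z : ℝ =>
        (1 + θ^2/(d:ℝ)) / (1 - θ^2/(d:ℝ))^2 *
          ((tp p (θ * z / (1 - θ^2/(d:ℝ))) * z) * phi1 z) := by
      funext z; rw [hF']; ring
    rw [this, integral_const_mul]
    rfl
  rw [hint] at key
  -- elementary derivatives
  have hA := hasDerivAt_logTerm hd hS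
  have hB := hasDerivAt_quadTerm hd hS
  have total := (hA.add hB).sub key
  have hell : ell p d = fun x : ℝ => ((d:ℝ)/2) * Real.log (2*π*(1 - x^2/(d:ℝ)))
      + ((d:ℝ) + x^2)/(2*(1 - x^2/(d:ℝ))) - ∫ z : ℝ, F x z := rfl
  rw [hell, combine_algebra hd (m p d θ) hS]
  exact total


end OMDA
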